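/- Let n ≥ 2, let 1 ≤ p ≤ n−1, let l ≥ 0 be an integer, and let g(z) = Σ_{j=0}^{⌊l/2⌋} a_j z^{l−2j} ∈ Pol_l[z]_even. Then x_p·((I_l g)(−Δ', ∂_n) δ) = ∂_p((I_{l−2}((l−θ)g))(−Δ', ∂_n) δ) as tempered distributions on ℝ^n (for l ≤ 1 the right-hand side is 0, since (l−θ)g = 0). -/

import Mathlib

/-- Partial derivative ∂_p of a complex-valued function on ℝ^n. -/
noncomputable def pd {n : ℕ} (p : Fin n) (f : (Fin n → ℝ) → ℂ) : (Fin n → ℝ) → ℂ :=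
  fun x => fderiv ℝ f x (Pi.single p 1)

/-- Δ' = ∂_1² + ⋯ + ∂_{n−1}², the Laplacian in the first n−1 variables on ℝ^n. -/
noncomputable def lapP {n : ℕ} (f : (Fin n → ℝ) → ℂ) : (Fin n → ℝ) → ℂ :=
  fun x => ∑ j ∈ Finset.univ.filter (fun j : Fin n => (j : ℕ) < n - 1), pd j (pd j f) x

/-- ∂_n, the partial derivative in the last variable on ℝ^n. -/
noncomputable def pdLast {n : ℕ} (f : (Fin n → ℝ) → ℂ) : (Fin n → ℝ) → ℂ :=
  if h : 0 < n then pd ⟨n - 1, by omega⟩ f else 0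

/-- The action of the distribution `(I_l g)(−Δ', ∂_n) δ = Σ_j a_j (−1)^j (Δ')^j ∂_n^{l−2j} δ`
(with `a_j` the coefficient of `z^{l−2j}` in `g`) on a test function `φ`; each `∂`
contributes a sign `−1` and δ evaluates at 0.  By convention it is 0 for `l < 0`. -/
noncomputable def IOpAct (n : ℕ) (l : ℤ) (g : Polynomial ℂ) (φ : (Fin n → ℝ) → ℂ) : ℂ :=
  if 0 ≤ l then
    ∑ j ∈ Finset.range (l.toNat / 2 + 1),
      g.coeff (l.toNat - 2 * j) *
        ((-1 : ℂ) ^ j * ((-1 : ℂ) ^ (l.toNat - 2 * j) *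
          (pdLast (n := n))^[l.toNat - 2 * j] ((lapP (n := n))^[j] φ) 0))
  else 0

/-! Tested against `φ`, both sides are finite sums of derivatives of `φ` at the origin. Because
`p ≠ n`, `∂_n` commutes with multiplication by `x_p`, while the Leibniz rule gives
`(Δ')^j (x_p f) = x_p (Δ')^j f + 2j ∂_p (Δ')^{j-1} f`; at the origin only the second term
survives. After the shift `j = i + 1`, the factor `2j = l - (l - 2 - 2i)` is exactly the
coefficient that `l - θ` puts on `z^{l-2-2i}`, and the sign of `∂_p T` absorbs the extra `(-1)`. -/

open scoped ContDiff

section PartialDerivatives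

variable {n : ℕ}

lemma contDiff_pd {f : (Fin n → ℝ) → ℂ} (hf : ContDiff ℝ ∞ f) (p : Fin n) :
    ContDiff ℝ ∞ (pd p f) :=
  (hf.fderiv_right ENat.coe_top_add_one.le).clm_apply contDiff_const

lemma contDiff_iterate_pd {f : (Fin n → ℝ) → ℂ} (hf : ContDiff ℝ ∞ f) (p : Fin n) (k : ℕ) :
    ContDiff ℝ ∞ ((pd p)^[k] f) := by
  induction k with
  | zero => exact hf
  | succ k ih => rw [Function.iterate_succ_apply']; exact contDiff_pd ih p

lemma pd_comm {f : (Fin n → ℝ) → ℂ} (hf : ContDiff ℝ ∞ f) (q r : Fin n) :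
    pd q (pd r f) = pd r (pd q f) := by
  funext x
  have hdiff : DifferentiableAt ℝ (fderiv ℝ f) x :=
    ((hf.fderiv_right ENat.coe_top_add_one.le).differentiable (by simp)).differentiableAt
  have hpd : ∀ v : Fin n → ℝ,
      fderiv ℝ (fun y => fderiv ℝ f y v) x = (fderiv ℝ (fderiv ℝ f) x).flip v := by
    intro v
    rw [fderiv_clm_apply hdiff (differentiableAt_const v)]
    ext w
    simp
  have hsymm := hf.contDiffAt.isSymmSndFDerivAt (x := x)
    (by simpa using ENat.LEInfty.out) (Pi.single q 1) (Pi.single r 1)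
  unfold pd
  rw [hpd, hpd]
  simpa using hsymm

lemma pd_add {f g : (Fin n → ℝ) → ℂ} (hf : Differentiable ℝ f) (hg : Differentiable ℝ g)
    (p : Fin n) : pd p (fun x => f x + g x) = fun x => pd p f x + pd p g x := by
  funext x
  simp [pd, fderiv_fun_add (hf x) (hg x)]

lemma pd_const_mul {f : (Fin n → ℝ) → ℂ} (hf : Differentiable ℝ f) (c : ℂ) (p : Fin n) :
    pd p (fun x => c * f x) = fun x => c * pd p f x := by
  funext x
  simp [pd, fderiv_const_mul (hf x) c]

lemma pd_add_const_mul {f g : (Fin n → ℝ) → ℂ} (hf : Differentiable ℝ f)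
    (hg : Differentiable ℝ g) (c : ℂ) (p : Fin n) :
    pd p (fun x => f x + c * g x) = fun x => pd p f x + c * pd p g x := by
  rw [pd_add hf (hg.const_mul c), pd_const_mul hg]

lemma pd_sum {ι : Type*} (s : Finset ι) {F : ι → (Fin n → ℝ) → ℂ}
    (hF : ∀ i ∈ s, Differentiable ℝ (F i)) (p : Fin n) :
    pd p (fun x => ∑ i ∈ s, F i x) = fun x => ∑ i ∈ s, pd p (F i) x := by
  funext x
  simp [pd, fderiv_fun_sum fun i hi => hF i hi x]

lemma contDiff_coord (p : Fin n) : ContDiff ℝ ∞ (fun x : Fin n → ℝ => ((x p : ℝ) : ℂ)) :=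
  Complex.ofRealCLM.contDiff.comp (contDiff_apply ℝ ℝ p)

lemma pd_coord_mul {f : (Fin n → ℝ) → ℂ} (hf : Differentiable ℝ f) (p q : Fin n) :
    pd q (fun x => (x p : ℂ) * f x) = fun x => (x p : ℂ) * pd q f x + if q = p then f x else 0 := by
  funext x
  have hcoord : HasFDerivAt (fun x : Fin n → ℝ => ((x p : ℝ) : ℂ))
      (Complex.ofRealCLM.comp (ContinuousLinearMap.proj p)) x :=
    (Complex.ofRealCLM.comp (ContinuousLinearMap.proj p : (Fin n → ℝ) →L[ℝ] ℝ)).hasFDerivAt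
  rw [pd, (hcoord.fun_mul (hf x).hasFDerivAt).fderiv]
  by_cases hq : q = p <;> simp [hq, pd]

lemma iterate_pd_add_const_mul {f g : (Fin n → ℝ) → ℂ} (hf : ContDiff ℝ ∞ f)
    (hg : ContDiff ℝ ∞ g) (c : ℂ) (q : Fin n) (k : ℕ) :
    (pd q)^[k] (fun x => f x + c * g x) = fun x => (pd q)^[k] f x + c * (pd q)^[k] g x := by
  induction k with
  | zero => rfl
  | succ k ih =>
    simp only [Function.iterate_succ_apply', ih]
    exact pd_add_const_mul ((contDiff_iterate_pd hf q k).differentiable (by simp))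
      ((contDiff_iterate_pd hg q k).differentiable (by simp)) c q

lemma iterate_pd_coord_mul {f : (Fin n → ℝ) → ℂ} (hf : ContDiff ℝ ∞ f) {p q : Fin n}
    (hqp : q ≠ p) (k : ℕ) :
    (pd q)^[k] (fun x => (x p : ℂ) * f x) = fun x => (x p : ℂ) * (pd q)^[k] f x := by
  induction k with
  | zero => rfl
  | succ k ih =>
    simp only [Function.iterate_succ_apply', ih,
      pd_coord_mul ((contDiff_iterate_pd hf q k).differentiable (by simp)), hqp, if_false,
      add_zero]

end PartialDerivatives

section TangentialLaplacian

variable {n : ℕ}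

lemma contDiff_lapP {f : (Fin n → ℝ) → ℂ} (hf : ContDiff ℝ ∞ f) : ContDiff ℝ ∞ (lapP f) :=
  ContDiff.sum fun j _ => contDiff_pd (contDiff_pd hf j) j

lemma contDiff_iterate_lapP {f : (Fin n → ℝ) → ℂ} (hf : ContDiff ℝ ∞ f) (k : ℕ) :
    ContDiff ℝ ∞ (lapP^[k] f) := by
  induction k with
  | zero => exact hf
  | succ k ih => rw [Function.iterate_succ_apply']; exact contDiff_lapP ih

lemma pd_lapP_comm {f : (Fin n → ℝ) → ℂ} (hf : ContDiff ℝ ∞ f) (p : Fin n) :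
    pd p (lapP f) = lapP (pd p f) := by
  unfold lapP
  rw [pd_sum _ fun j _ => (contDiff_pd (contDiff_pd hf j) j).differentiable (by simp)]
  funext x
  refine Finset.sum_congr rfl fun j _ => ?_
  rw [pd_comm (contDiff_pd hf j) p j, pd_comm hf p j]

lemma pd_iterate_lapP_comm {f : (Fin n → ℝ) → ℂ} (hf : ContDiff ℝ ∞ f) (p : Fin n) (k : ℕ) :
    pd p (lapP^[k] f) = lapP^[k] (pd p f) := by
  induction k with
  | zero => rfl
  | succ k ih =>
    rw [Function.iterate_succ_apply', Function.iterate_succ_apply',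
      pd_lapP_comm (contDiff_iterate_lapP hf k), ih]

lemma lapP_add_const_mul {f g : (Fin n → ℝ) → ℂ} (hf : ContDiff ℝ ∞ f) (hg : ContDiff ℝ ∞ g)
    (c : ℂ) : lapP (fun x => f x + c * g x) = fun x => lapP f x + c * lapP g x := by
  have hterm : ∀ j : Fin n, pd j (pd j fun x => f x + c * g x)
      = fun x => pd j (pd j f) x + c * pd j (pd j g) x := fun j => by
    rw [pd_add_const_mul (hf.differentiable (by simp)) (hg.differentiable (by simp)),
      pd_add_const_mul ((contDiff_pd hf j).differentiable (by simp))
        ((contDiff_pd hg j).differentiable (by simp))]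
  funext x
  simp only [lapP, hterm, Finset.sum_add_distrib, Finset.mul_sum]

lemma lapP_coord_mul {f : (Fin n → ℝ) → ℂ} (hf : ContDiff ℝ ∞ f) {p : Fin n}
    (hp : (p : ℕ) < n - 1) :
    lapP (fun x => (x p : ℂ) * f x) = fun x => (x p : ℂ) * lapP f x + 2 * pd p f x := by
  have hterm : ∀ j : Fin n, pd j (pd j fun x => (x p : ℂ) * f x)
      = fun x => (x p : ℂ) * pd j (pd j f) x + if j = p then 2 * pd j f x else 0 := by
    intro j
    have hf' := hf.differentiable (by simp)
    have hpdf := (contDiff_pd hf j).differentiable (by simp)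
    by_cases hj : j = p
    · subst hj
      simp only [pd_coord_mul hf', if_true]
      rw [pd_add (((contDiff_coord j).differentiable (by simp)).fun_mul hpdf) hf',
        pd_coord_mul hpdf]
      funext x
      simp only [if_true]
      ring
    · simp only [pd_coord_mul hf', pd_coord_mul hpdf, hj, if_false, add_zero]
  funext x
  simp only [lapP, hterm, Finset.sum_add_distrib, ← Finset.mul_sum, Finset.sum_ite_eq',
    Finset.mem_filter, Finset.mem_univ, true_and, hp, if_true]

lemma iterate_lapP_coord_mul {f : (Fin n → ℝ) → ℂ} (hf : ContDiff ℝ ∞ f) {p : Fin n}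
    (hp : (p : ℕ) < n - 1) (k : ℕ) :
    lapP^[k] (fun x => (x p : ℂ) * f x)
      = fun x => (x p : ℂ) * lapP^[k] f x + 2 * k * lapP^[k - 1] (pd p f) x := by
  induction k with
  | zero => funext x; simp
  | succ k ih =>
    have hlap := contDiff_iterate_lapP hf k
    rw [Function.iterate_succ_apply', ih,
      lapP_add_const_mul ((contDiff_coord p).mul hlap) (contDiff_iterate_lapP (contDiff_pd hf p) _),
      lapP_coord_mul hlap hp, pd_iterate_lapP_comm hf, ← Function.iterate_succ_apply' lapP k f]
    funext x
    cases k with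
    | zero => simp
    | succ k =>
      simp only [Nat.add_sub_cancel, ← Function.iterate_succ_apply' lapP k (pd p f)]
      push_cast
      ring

end TangentialLaplacian

section DeltaDerivatives

variable {n : ℕ}

lemma pdLast_eq_pd (hn : 0 < n) : (pdLast (n := n)) = pd ⟨n - 1, by omega⟩ := by
  funext f
  simp [pdLast, hn]

lemma iterate_pdLast_iterate_lapP_coord_mul_apply_zero {f : (Fin n → ℝ) → ℂ}
    (hf : ContDiff ℝ ∞ f) {p : Fin n} (hp : (p : ℕ) < n - 1) (j k : ℕ) :
    pdLast^[k] (lapP^[j] fun x => (x p : ℂ) * f x) 0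
      = 2 * j * pdLast^[k] (lapP^[j - 1] (pd p f)) 0 := by
  have hlast : (⟨n - 1, by omega⟩ : Fin n) ≠ p := Fin.ne_of_val_ne (by simp only; omega)
  rw [pdLast_eq_pd (by omega), iterate_lapP_coord_mul hf hp,
    iterate_pd_add_const_mul ((contDiff_coord p).mul (contDiff_iterate_lapP hf j))
      (contDiff_iterate_lapP (contDiff_pd hf p) _),
    iterate_pd_coord_mul (contDiff_iterate_lapP hf j) hlast]
  simp

lemma IOpAct_natCast (l : ℕ) (g : Polynomial ℂ) (φ : (Fin n → ℝ) → ℂ) :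
    IOpAct n l g φ = ∑ j ∈ Finset.range (l / 2 + 1), g.coeff (l - 2 * j) *
      ((-1 : ℂ) ^ j * ((-1 : ℂ) ^ (l - 2 * j) * pdLast^[l - 2 * j] (lapP^[j] φ) 0)) := by
  simp [IOpAct]

lemma IOpAct_of_neg {l : ℤ} (hl : l < 0) (g : Polynomial ℂ) (φ : (Fin n → ℝ) → ℂ) :
    IOpAct n l g φ = 0 :=
  if_neg hl.not_ge

end DeltaDerivatives

lemma coeff_C_mul_sub_X_mul_derivative (g : Polynomial ℂ) (l m : ℕ) :
    (Polynomial.C (l : ℂ) * g - Polynomial.X * Polynomial.derivative g).coeff m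
      = (l - m) * g.coeff m := by
  rcases m with _ | m
  · simp [Polynomial.mul_coeff_zero]
  · rw [Polynomial.coeff_sub, Polynomial.coeff_C_mul, Polynomial.coeff_X_mul,
      Polynomial.coeff_derivative]
    push_cast
    ring

theorem stmt8_general (n : ℕ) (p : Fin n) (hp : (p : ℕ) < n - 1)
    (l : ℕ) (g : Polynomial ℂ)
    (φ : SchwartzMap (Fin n → ℝ) ℂ) :
    IOpAct n (l : ℤ) g (fun x => (x p : ℂ) * φ x)
      = -(IOpAct n ((l : ℤ) - 2)
          (Polynomial.C (l : ℂ) * g - Polynomial.X * Polynomial.derivative g) (pd p ⇑φ)) := by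
  rw [IOpAct_natCast]
  simp only [iterate_pdLast_iterate_lapP_coord_mul_apply_zero (φ.smooth ⊤) hp]
  obtain hl | ⟨m, rfl⟩ : l < 2 ∨ ∃ m, l = m + 2 := by
    rcases lt_or_ge l 2 with hl | hl
    · exact .inl hl
    · exact .inr ⟨l - 2, by omega⟩
  · rw [IOpAct_of_neg (by omega), Nat.div_eq_of_lt hl, Finset.sum_range_one]
    simp
  · rw [show ((m + 2 : ℕ) : ℤ) - 2 = m by push_cast; ring, IOpAct_natCast,
      show (m + 2) / 2 + 1 = m / 2 + 1 + 1 by omega, Finset.sum_range_succ',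
      ← Finset.sum_neg_distrib]
    simp only [CharP.cast_eq_zero, mul_zero, zero_mul, add_zero]
    refine Finset.sum_congr rfl fun i hi => ?_
    have hi : 2 * i ≤ m := by have := Finset.mem_range.mp hi; omega
    rw [show m + 2 - 2 * (i + 1) = m - 2 * i by omega, Nat.add_sub_cancel,
      coeff_C_mul_sub_X_mul_derivative, Nat.cast_sub hi]
    push_cast
    ring

/-- `x_p·((I_l g)(−Δ', ∂_n) δ) = ∂_p((I_{l−2}((l−θ)g))(−Δ', ∂_n) δ)` as tempered
distributions on ℝ^n, tested against an arbitrary Schwartz function `φ`;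
`(x_p·T)(φ) = T(x_p φ)` and `(∂_p T)(φ) = −T(∂_p φ)`, and θ = z d/dz. -/
theorem stmt8 (n : ℕ) (hn : 2 ≤ n) (p : Fin n) (hp : (p : ℕ) < n - 1)
    (l : ℕ) (a : ℕ → ℂ) (g : Polynomial ℂ)
    (hg : g = ∑ j ∈ Finset.range (l / 2 + 1), Polynomial.C (a j) * Polynomial.X ^ (l - 2 * j))
    (φ : SchwartzMap (Fin n → ℝ) ℂ) :
    IOpAct n (l : ℤ) g (fun x => (x p : ℂ) * φ x)
      = -(IOpAct n ((l : ℤ) - 2)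
          (Polynomial.C (l : ℂ) * g - Polynomial.X * Polynomial.derivative g) (pd p ⇑φ)) :=
  stmt8_general n p hp l g φ
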